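/- arXiv:2312.14141 — 6 statements merged into one kernel-verified Lean document; each statement's English description precedes it below -/
import Mathlib

section
/- Any two minimizers β̂₁, β̂₂ of the Lasso cost function β ↦ (1/2)‖y − Xβ‖₂² + λ‖β‖₁ (with λ > 0) give the same fitted value: Xβ̂₁ = Xβ̂₂. -/
open Matrix

/-- The Lasso cost function `β ↦ (1/2)‖y − Xβ‖₂² + λ‖β‖₁`. -/
noncomputable def lassoCost {n d : ℕ} (X : Matrix (Fin n) (Fin d) ℝ) (y : Fin n → ℝ)
    (lam : ℝ) (β : Fin d → ℝ) : ℝ :=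
  (1 / 2) * ∑ i, (y i - X.mulVec β i) ^ 2 + lam * ∑ j, |β j|

/-- Any two Lasso minimizers give the same fitted value `Xβ̂`. -/
theorem lasso_fit_unique {n d : ℕ} (X : Matrix (Fin n) (Fin d) ℝ) (y : Fin n → ℝ)
    (lam : ℝ) (hlam : 0 < lam) (β₁ β₂ : Fin d → ℝ)
    (h₁ : ∀ β : Fin d → ℝ, lassoCost X y lam β₁ ≤ lassoCost X y lam β)
    (h₂ : ∀ β : Fin d → ℝ, lassoCost X y lam β₂ ≤ lassoCost X y lam β) :
    X.mulVec β₁ = X.mulVec β₂ := by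
  set β : Fin d → ℝ := fun j => (β₁ j + β₂ j) / 2 with hβ
  have hmv : ∀ i, X.mulVec β i = (X.mulVec β₁ i + X.mulVec β₂ i) / 2 := by
    intro i
    simp only [Matrix.mulVec, dotProduct, hβ]
    rw [← Finset.sum_add_distrib, Finset.sum_div]
    exact Finset.sum_congr rfl fun j _ => by ring
  have habs : ∑ j, |β j| ≤ (∑ j, |β₁ j| + ∑ j, |β₂ j|) / 2 := by
    rw [← Finset.sum_add_distrib, Finset.sum_div]
    apply Finset.sum_le_sum
    intro j _
    have h1 : |β₁ j + β₂ j| ≤ |β₁ j| + |β₂ j| := abs_add_le _ _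
    have h2 : |β j| = |β₁ j + β₂ j| / 2 := by
      simp [hβ, abs_div]
    rw [h2]
    linarith
  set S : ℝ := ∑ i, (X.mulVec β₁ i - X.mulVec β₂ i) ^ 2 with hS
  have hsum : ∑ i, (y i - X.mulVec β i) ^ 2 =
      (∑ i, (y i - X.mulVec β₁ i) ^ 2 + ∑ i, (y i - X.mulVec β₂ i) ^ 2) / 2 - S / 4 := by
    rw [hS, ← Finset.sum_add_distrib, Finset.sum_div, Finset.sum_div, ← Finset.sum_sub_distrib]
    apply Finset.sum_congr rfl
    intro i _
    rw [hmv i]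
    ring
  have hcost : lassoCost X y lam β ≤
      (lassoCost X y lam β₁ + lassoCost X y lam β₂) / 2 - S / 8 := by
    unfold lassoCost
    rw [hsum]
    have hl := mul_le_mul_of_nonneg_left habs hlam.le
    linarith
  have hle : lassoCost X y lam β₁ ≤ lassoCost X y lam β := h₁ β
  have heq : lassoCost X y lam β₁ = lassoCost X y lam β₂ := le_antisymm (h₁ β₂) (h₂ β₁)
  have hS0 : S ≤ 0 := by linarith
  have hz : ∀ i ∈ Finset.univ, (X.mulVec β₁ i - X.mulVec β₂ i) ^ 2 = 0 := by
    rw [← Finset.sum_eq_zero_iff_of_nonneg fun i _ => sq_nonneg _]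
    exact le_antisymm hS0 (Finset.sum_nonneg fun i _ => sq_nonneg _)
  funext i
  have := hz i (Finset.mem_univ i)
  have := pow_eq_zero_iff (n := 2) (by norm_num) |>.mp this
  linarith [sub_eq_zero.mp this]
end

section
/- Under the standard linear model y = Xβ* + w, for λ > 0 and ε ∈ [0,1), if λ ≥ ‖Xᵀw‖_∞/(1−ε) and β̃ ∈ ℝ^d satisfies (1/2)‖y − Xβ̃‖₂² + λ‖β̃‖₁ ≤ min_β[(1/2)‖y − Xβ‖₂² + λ‖β‖₁] + λε‖β̃‖₁, then ‖X(β* − β̃)‖₂² ≤ 2(2−ε)λ‖β*‖₁. -/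
/-!
Comparing the cost of `β̃` with that of `β*` (the infimum is at most the value at `β*`) and
expanding `y − Xβ = X(β* − β) + w` gives the basic inequality
`½‖XΔ‖² ≤ λ‖β*‖₁ − (1 − ε)λ‖β̃‖₁ − ⟨Δ, Xᵀw⟩` for `Δ = β* − β̃`. Hölder's inequality bounds the
noise term by `‖Xᵀw‖_∞ ‖Δ‖₁ ≤ (1 − ε)λ(‖β*‖₁ + ‖β̃‖₁)`, and the `‖β̃‖₁` terms cancel.
-/

open Matrix

section

variable {ι : Type*} [Fintype ι]

theorem sum_sq_add_eq (u w : ι → ℝ) :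
    ∑ i, (u i + w i) ^ 2 = ∑ i, u i ^ 2 + 2 * (u ⬝ᵥ w) + ∑ i, w i ^ 2 := by
  simp only [dotProduct, Finset.mul_sum, ← Finset.sum_add_distrib]
  exact Finset.sum_congr rfl fun i _ => by ring

theorem abs_dotProduct_le_mul_sum_abs {v g : ι → ℝ} {c : ℝ} (hg : ∀ j, |g j| ≤ c) :
    |v ⬝ᵥ g| ≤ c * ∑ j, |v j| := by
  refine (Finset.abs_sum_le_sum_abs _ _).trans ?_
  rw [Finset.mul_sum]
  refine Finset.sum_le_sum fun j _ => ?_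
  rw [abs_mul, mul_comm c]
  exact mul_le_mul_of_nonneg_left (hg j) (abs_nonneg _)

theorem sum_abs_sub_le (a b : ι → ℝ) : ∑ j, |a j - b j| ≤ ∑ j, |a j| + ∑ j, |b j| := by
  rw [← Finset.sum_add_distrib]
  exact Finset.sum_le_sum fun j _ => abs_sub _ _

end

section

variable {n d : ℕ} {X : Matrix (Fin n) (Fin d) ℝ} {y : Fin n → ℝ} {lam : ℝ}

theorem lassoCost_nonneg (hlam : 0 ≤ lam) (β : Fin d → ℝ) : 0 ≤ lassoCost X y lam β := by
  unfold lassoCost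
  have := mul_nonneg hlam (Finset.sum_nonneg fun j (_ : j ∈ Finset.univ) => abs_nonneg (β j))
  positivity

theorem lassoCost_le_of_le_iInf_add (hlam : 0 ≤ lam) {βt : Fin d → ℝ} {r : ℝ}
    (h : lassoCost X y lam βt ≤ (⨅ β, lassoCost X y lam β) + r) (β : Fin d → ℝ) :
    lassoCost X y lam βt ≤ lassoCost X y lam β + r :=
  h.trans <| add_le_add_left (ciInf_le ⟨0, Set.forall_mem_range.2 (lassoCost_nonneg hlam)⟩ β) r

theorem lassoCost_of_linear_model {βs : Fin d → ℝ} {w : Fin n → ℝ} (hy : y = X *ᵥ βs + w)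
    (β : Fin d → ℝ) :
    lassoCost X y lam β = (1 / 2) * ∑ i, (X *ᵥ (βs - β)) i ^ 2 + (X *ᵥ (βs - β)) ⬝ᵥ w
      + (1 / 2) * ∑ i, w i ^ 2 + lam * ∑ j, |β j| := by
  have hres : y - X *ᵥ β = X *ᵥ (βs - β) + w := by
    rw [hy, mulVec_sub]
    abel
  unfold lassoCost
  rw [show ∑ i, (y i - (X *ᵥ β) i) ^ 2 = ∑ i, ((X *ᵥ (βs - β)) i + w i) ^ 2 from
    Finset.sum_congr rfl fun i _ => by rw [← Pi.sub_apply, hres, Pi.add_apply], sum_sq_add_eq]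
  ring

end

theorem lasso_slow_rate_general {n d : ℕ} (X : Matrix (Fin n) (Fin d) ℝ)
    (βs : Fin d → ℝ) (w : Fin n → ℝ) (y : Fin n → ℝ) (hy : y = fun i => X.mulVec βs i + w i)
    (lam ε : ℝ) (hlam : 0 < lam) (hε₁ : ε < 1)
    (hlamw : ∀ j, |∑ i, X i j * w i| ≤ (1 - ε) * lam)
    (βt : Fin d → ℝ)
    (happrox : lassoCost X y lam βt ≤
      (⨅ β : Fin d → ℝ, lassoCost X y lam β) + lam * ε * ∑ j, |βt j|) :
    ∑ i, (X.mulVec (fun j => βs j - βt j) i) ^ 2 ≤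
      2 * (2 - ε) * lam * ∑ j, |βs j| := by
  have hbasic := lassoCost_le_of_le_iInf_add hlam.le happrox βs
  rw [lassoCost_of_linear_model hy, lassoCost_of_linear_model hy, sub_self, mulVec_zero] at hbasic
  simp only [Pi.zero_apply, zero_dotProduct, zero_pow two_ne_zero, Finset.sum_const_zero,
    mul_zero, zero_add] at hbasic
  have hcross : |(X *ᵥ (βs - βt)) ⬝ᵥ w| ≤ (1 - ε) * lam * ∑ j, |βs j - βt j| := by
    rw [dotProduct_comm, dotProduct_mulVec, ← mulVec_transpose, dotProduct_comm]
    exact abs_dotProduct_le_mul_sum_abs hlamw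
  have htri := mul_le_mul_of_nonneg_left (sum_abs_sub_le βs βt)
    (mul_nonneg (sub_nonneg.2 hε₁.le) hlam.le)
  change ∑ i, (X *ᵥ (βs - βt)) i ^ 2 ≤ _
  linarith [neg_abs_le ((X *ᵥ (βs - βt)) ⬝ᵥ w)]

/-- Slow-rate bound: under the linear model `y = Xβ* + w`, if `λ ≥ ‖Xᵀw‖_∞ / (1 − ε)`
and `β̃` is an approximate Lasso solution with error `λ ε ‖β̃‖₁`, then
`‖X(β* − β̃)‖₂² ≤ 2(2 − ε)λ‖β*‖₁`. -/
theorem lasso_slow_rate {n d : ℕ} (X : Matrix (Fin n) (Fin d) ℝ)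
    (βs : Fin d → ℝ) (w : Fin n → ℝ) (y : Fin n → ℝ) (hy : y = fun i => X.mulVec βs i + w i)
    (lam ε : ℝ) (hlam : 0 < lam) (hε₀ : 0 ≤ ε) (hε₁ : ε < 1)
    (hlamw : ∀ j, |∑ i, X i j * w i| ≤ (1 - ε) * lam)
    (βt : Fin d → ℝ)
    (happrox : lassoCost X y lam βt ≤
      (⨅ β : Fin d → ℝ, lassoCost X y lam β) + lam * ε * ∑ j, |βt j|) :
    ∑ i, (X.mulVec (fun j => βs j - βt j) i) ^ 2 ≤
      2 * (2 - ε) * lam * ∑ j, |βs j| :=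
  lasso_slow_rate_general X βs w y hy lam ε hlam hε₁ hlamw βt happrox
end

section
/- Under the linear model y = Xβ* + w, if β̃ is an approximate Lasso solution with error λε‖β̃‖₁ where ε ≤ 1/4, λ ≥ 4‖Xᵀw‖_∞, and λ > 0, then ‖β̃‖₁ ≤ (5/2)‖β*‖₁. -/
open Matrix

/-- Under the linear model `y = Xβ* + w`, if `β̃` is an approximate Lasso solution with
error `λ ε ‖β̃‖₁` where `ε ≤ 1/4` and `λ ≥ 4‖Xᵀw‖_∞`, then `‖β̃‖₁ ≤ (5/2)‖β*‖₁`. -/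
theorem approx_lasso_l1_bound {n d : ℕ} (X : Matrix (Fin n) (Fin d) ℝ)
    (βs : Fin d → ℝ) (w : Fin n → ℝ) (y : Fin n → ℝ)
    (hy : y = fun i => X.mulVec βs i + w i)
    (lam ε : ℝ) (hlam : 0 < lam) (hε₀ : 0 ≤ ε) (hε₁ : ε ≤ 1 / 4)
    (hlamw : ∀ j, 4 * |∑ i, X i j * w i| ≤ lam)
    (βt : Fin d → ℝ)
    (happrox : (1 / 2) * ∑ i, (y i - X.mulVec βt i) ^ 2 + lam * (1 - ε) * ∑ j, |βt j| ≤
      (1 / 2) * ∑ i, (y i - X.mulVec βs i) ^ 2 + lam * ∑ j, |βs j|) :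
    ∑ j, |βt j| ≤ (5 / 2) * ∑ j, |βs j| := by
  set c : Fin d → ℝ := fun j => ∑ i, X i j * w i with hc
  -- residual at βs is w
  have hres_s : ∀ i, y i - X.mulVec βs i = w i := by
    intro i; rw [hy]; ring
  -- expand residual at βt
  have h1 : ∑ i, (y i - X.mulVec βt i) ^ 2 =
      ∑ i, w i ^ 2 + 2 * ∑ i, w i * (X.mulVec βs i - X.mulVec βt i)
        + ∑ i, (X.mulVec βs i - X.mulVec βt i) ^ 2 := by
    have hpt : ∀ i, (y i - X.mulVec βt i) ^ 2 =
        w i ^ 2 + 2 * (w i * (X.mulVec βs i - X.mulVec βt i))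
          + (X.mulVec βs i - X.mulVec βt i) ^ 2 := fun i => by rw [hy]; ring
    simp only [hpt]
    rw [Finset.sum_add_distrib, Finset.sum_add_distrib, ← Finset.mul_sum]
  -- swap sums
  have hswap : ∑ i, w i * (X.mulVec βs i - X.mulVec βt i) = ∑ j, c j * (βs j - βt j) := by
    simp only [Matrix.mulVec, dotProduct, hc]
    calc ∑ i, w i * (∑ j, X i j * βs j - ∑ j, X i j * βt j)
        = ∑ i, ∑ j, X i j * w i * (βs j - βt j) := by
          refine Finset.sum_congr rfl fun i _ => ?_
          rw [← Finset.sum_sub_distrib, Finset.mul_sum]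
          refine Finset.sum_congr rfl fun j _ => by ring
      _ = ∑ j, ∑ i, X i j * w i * (βs j - βt j) := Finset.sum_comm
      _ = ∑ j, (∑ i, X i j * w i) * (βs j - βt j) := by
          refine Finset.sum_congr rfl fun j _ => (Finset.sum_mul ..).symm
  -- bound the cross term
  have hcross : -∑ j, c j * (βs j - βt j) ≤ (lam / 4) * (∑ j, |βt j| + ∑ j, |βs j|) := by
    rw [← Finset.sum_neg_distrib, ← Finset.sum_add_distrib, Finset.mul_sum]
    refine Finset.sum_le_sum fun j _ => ?_
    have h1 : -(c j * (βs j - βt j)) ≤ |c j| * (|βt j| + |βs j|) := by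
      calc -(c j * (βs j - βt j)) ≤ |c j * (βs j - βt j)| := neg_le_abs _
        _ = |c j| * |βs j - βt j| := abs_mul _ _
        _ ≤ |c j| * (|βs j| + |βt j|) :=
            mul_le_mul_of_nonneg_left (abs_sub _ _) (abs_nonneg _)
        _ = |c j| * (|βt j| + |βs j|) := by ring
    have h2 : |c j| ≤ lam / 4 := by linarith [hlamw j]
    calc -(c j * (βs j - βt j)) ≤ |c j| * (|βt j| + |βs j|) := h1
      _ ≤ (lam / 4) * (|βt j| + |βs j|) :=
          mul_le_mul_of_nonneg_right h2 (by positivity)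
  -- residual-based key inequality
  have hsq : 0 ≤ ∑ i, (X.mulVec βs i - X.mulVec βt i) ^ 2 :=
    Finset.sum_nonneg fun i _ => sq_nonneg _
  have hsums : ∑ i, (y i - X.mulVec βs i) ^ 2 = ∑ i, w i ^ 2 :=
    Finset.sum_congr rfl fun i _ => by rw [hres_s i]
  have key : lam * (1 - ε) * ∑ j, |βt j| ≤
      lam * ∑ j, |βs j| + (lam / 4) * (∑ j, |βt j| + ∑ j, |βs j|) := by
    rw [hsums] at happrox
    rw [h1, hswap] at happrox
    nlinarith [hcross]
  have hSt : 0 ≤ ∑ j, |βt j| := Finset.sum_nonneg fun j _ => abs_nonneg _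
  have hSs : 0 ≤ ∑ j, |βs j| := Finset.sum_nonneg fun j _ => abs_nonneg _
  nlinarith [mul_le_mul_of_nonneg_right (mul_le_mul_of_nonneg_left hε₁ hlam.le) hSt]
end

section
/- Suppose X ∈ ℝ^{n×d} satisfies the Restricted Eigenvalue condition over S = supp(β*) with parameters (κ, 5), i.e., (1/n)‖XΔ‖₂² ≥ κ‖Δ‖₂² for all Δ ∈ ℝ^d with ‖Δ_{S^c}‖₁ ≤ 5‖Δ_S‖₁. If y = Xβ* + w, λ ≥ 4‖Xᵀw‖_∞, λ,κ > 0 and ε ∈ [0,1/4], then any approximate Lasso solution β̃ with error λε‖β̃‖₁ satisfies ‖X(β̃ − β*)‖₂² + 3λ‖β̃ − β*‖₁ ≤ 81λ²|S|/(nκ) + 18λε‖β*_S‖₁. -/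
open Matrix Finset

set_option maxHeartbeats 4000000 in

/-- Fast-rate bound for the Lasso under the Restricted Eigenvalue condition over
`S = supp(β*)` with parameters `(κ, 5)`. -/
theorem lasso_fast_rate {n d : ℕ} (hn : 0 < n) (X : Matrix (Fin n) (Fin d) ℝ)
    (βs : Fin d → ℝ) (w : Fin n → ℝ) (y : Fin n → ℝ)
    (hy : y = fun i => X.mulVec βs i + w i)
    (S : Finset (Fin d)) (hS : ∀ j, j ∈ S ↔ βs j ≠ 0)
    (κ lam ε : ℝ) (hκ : 0 < κ) (hlam : 0 < lam) (hε₀ : 0 ≤ ε) (hε₁ : ε ≤ 1 / 4)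
    (hRE : ∀ Δ : Fin d → ℝ,
      (∑ j ∈ Sᶜ, |Δ j|) ≤ 5 * ∑ j ∈ S, |Δ j| →
      κ * ∑ j, (Δ j) ^ 2 ≤ (1 / (n : ℝ)) * ∑ i, (X.mulVec Δ i) ^ 2)
    (hlamw : ∀ j, 4 * |∑ i, X i j * w i| ≤ lam)
    (βt : Fin d → ℝ)
    (happrox : (1 / 2) * ∑ i, (y i - X.mulVec βt i) ^ 2 + lam * (1 - ε) * ∑ j, |βt j| ≤
      (1 / 2) * ∑ i, (y i - X.mulVec βs i) ^ 2 + lam * ∑ j, |βs j|) :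
    ∑ i, (X.mulVec (fun j => βt j - βs j) i) ^ 2 + 3 * lam * ∑ j, |βt j - βs j| ≤
      81 * lam ^ 2 * (S.card : ℝ) / ((n : ℝ) * κ) + 18 * lam * ε * ∑ j ∈ S, |βs j| := by
  classical
  set Δ : Fin d → ℝ := fun j => βt j - βs j with hΔdef
  set T : ℝ := ∑ i, (X.mulVec Δ i) ^ 2 with hTdef
  set a : ℝ := ∑ j ∈ S, |Δ j| with hadef
  set b : ℝ := ∑ j ∈ Sᶜ, |Δ j| with hbdef
  set B : ℝ := ∑ j ∈ S, |βs j| with hBdef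
  set s : ℝ := (S.card : ℝ) with hsdef
  have hT0 : 0 ≤ T := Finset.sum_nonneg fun i _ => sq_nonneg _
  have ha0 : 0 ≤ a := Finset.sum_nonneg fun j _ => abs_nonneg _
  have hb0 : 0 ≤ b := Finset.sum_nonneg fun j _ => abs_nonneg _
  have hB0 : 0 ≤ B := Finset.sum_nonneg fun j _ => abs_nonneg _
  have hs0 : 0 ≤ s := Nat.cast_nonneg _
  have hn0 : (0:ℝ) < (n:ℝ) := by exact_mod_cast hn
  have hnκ : (0:ℝ) < (n:ℝ) * κ := mul_pos hn0 hκ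
  -- βs vanishes off S
  have hβs0 : ∀ j ∈ Sᶜ, βs j = 0 := fun j hj =>
    not_not.mp (fun h => (Finset.mem_compl.mp hj) ((hS j).mpr h))
  -- sum over univ splits
  have hab : ∑ j, |Δ j| = a + b := (Finset.sum_add_sum_compl S _).symm
  -- linearity of mulVec
  have hlin : ∀ i, X.mulVec Δ i = X.mulVec βt i - X.mulVec βs i := by
    intro i
    simp only [Matrix.mulVec, dotProduct, hΔdef, mul_sub, Finset.sum_sub_distrib]
  -- W : inner product of noise with XΔ
  set W : ℝ := ∑ i, w i * X.mulVec Δ i with hWdef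
  have hres : ∀ i, y i - X.mulVec βt i = w i - X.mulVec Δ i := by
    intro i; rw [hy, hlin i]; ring
  have hexp : ∑ i, (y i - X.mulVec βt i) ^ 2 = ∑ i, (w i) ^ 2 - 2 * W + T := by
    have h1 : ∀ i, (y i - X.mulVec βt i) ^ 2
        = (w i) ^ 2 - 2 * (w i * X.mulVec Δ i) + (X.mulVec Δ i) ^ 2 := by
      intro i; rw [hres i]; ring
    rw [Finset.sum_congr rfl fun i _ => h1 i]
    rw [Finset.sum_add_distrib, Finset.sum_sub_distrib, ← Finset.mul_sum]
  have hws : ∑ i, (y i - X.mulVec βs i) ^ 2 = ∑ i, (w i) ^ 2 := by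
    apply Finset.sum_congr rfl
    intro i _
    rw [hy]; ring_nf
  -- bound on W
  have hW : W ≤ (lam / 4) * (a + b) := by
    have hswap : W = ∑ j, (∑ i, X i j * w i) * Δ j := by
      rw [hWdef]
      simp only [Matrix.mulVec, dotProduct, Finset.mul_sum]
      rw [Finset.sum_comm]
      apply Finset.sum_congr rfl; intro j _
      rw [Finset.sum_mul]
      apply Finset.sum_congr rfl; intro i _; ring
    calc W = ∑ j, (∑ i, X i j * w i) * Δ j := hswap
      _ ≤ ∑ j, (lam / 4) * |Δ j| := by
        apply Finset.sum_le_sum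
        intro j _
        calc (∑ i, X i j * w i) * Δ j ≤ |(∑ i, X i j * w i) * Δ j| := le_abs_self _
          _ = |∑ i, X i j * w i| * |Δ j| := abs_mul _ _
          _ ≤ (lam / 4) * |Δ j| :=
            mul_le_mul_of_nonneg_right (by linarith [hlamw j]) (abs_nonneg _)
      _ = (lam / 4) * (a + b) := by rw [← Finset.mul_sum, hab]
  -- ℓ¹ norm of βs
  have hβsl1 : ∑ j, |βs j| = B := by
    rw [← Finset.sum_add_sum_compl S, ← hBdef]
    have : ∑ j ∈ Sᶜ, |βs j| = 0 :=
      Finset.sum_eq_zero fun j hj => by rw [hβs0 j hj, abs_zero]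
    rw [this, add_zero]
  -- lower bound on ℓ¹ norm of βt
  have hβtl1 : B - a + b ≤ ∑ j, |βt j| := by
    rw [← Finset.sum_add_sum_compl S]
    have h1 : B - a ≤ ∑ j ∈ S, |βt j| := by
      rw [hBdef, hadef, ← Finset.sum_sub_distrib]
      apply Finset.sum_le_sum
      intro j _
      have : |βs j| ≤ |βt j| + |Δ j| := by
        have : βs j = βt j - Δ j := by simp [hΔdef]
        rw [this]
        exact abs_sub _ _
      linarith
    have h2 : b = ∑ j ∈ Sᶜ, |βt j| := by
      rw [hbdef]
      apply Finset.sum_congr rfl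
      intro j hj
      rw [hΔdef]
      simp [hβs0 j hj]
    linarith [h2 ▸ le_refl (∑ j ∈ Sᶜ, |βt j|)]
  -- basic inequality
  have hhalf : (1/2) * T ≤ W + lam * B - lam * (1 - ε) * ∑ j, |βt j| := by
    rw [hexp, hws, hβsl1] at happrox
    linarith
  -- key inequality (★★)
  have hstar : T ≤ 3 * lam * a - lam * b + 2 * lam * ε * B := by
    have h1 : lam * (1 - ε) * (B - a + b) ≤ lam * (1 - ε) * ∑ j, |βt j| :=
      mul_le_mul_of_nonneg_left hβtl1 (by nlinarith)
    nlinarith [mul_nonneg (mul_nonneg hlam.le (by linarith : (0:ℝ) ≤ 1/4 - ε)) ha0,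
      mul_nonneg (mul_nonneg hlam.le (by linarith : (0:ℝ) ≤ 1/4 - ε)) hb0]
  -- consequence (†)
  have hdagger : T + 3 * lam * (a + b) ≤ 12 * lam * a + 6 * lam * ε * B := by linarith
  -- reduce the goal
  rw [hab]
  show T + 3 * lam * (a + b) ≤ 81 * lam ^ 2 * s / ((n:ℝ) * κ) + 18 * lam * ε * B
  have hrhs0 : 0 ≤ 81 * lam ^ 2 * s / ((n:ℝ) * κ) := by positivity
  -- the easy regime
  have easy : a ≤ ε * B → T + 3 * lam * (a + b) ≤
      81 * lam ^ 2 * s / ((n:ℝ) * κ) + 18 * lam * ε * B := by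
    intro hcase
    have h12 : 12 * lam * a ≤ 12 * lam * (ε * B) :=
      mul_le_mul_of_nonneg_left hcase (by linarith)
    linarith
  rcases le_or_gt b (5 * a) with hcone | hcone
  · -- RE condition applies
    have hre := hRE Δ (by rw [← hadef, ← hbdef]; linarith)
    rw [← hTdef] at hre
    set Q : ℝ := ∑ j, (Δ j) ^ 2 with hQdef
    have hQ0 : 0 ≤ Q := Finset.sum_nonneg fun j _ => sq_nonneg _
    have hnκQ : (n:ℝ) * κ * Q ≤ T := by
      have h1 : (n:ℝ) * (κ * Q) ≤ (n:ℝ) * ((1/(n:ℝ)) * T) :=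
        mul_le_mul_of_nonneg_left hre hn0.le
      have h2 : (n:ℝ) * ((1/(n:ℝ)) * T) = T := by field_simp
      nlinarith
    -- Cauchy–Schwarz on S
    have hcs : a ^ 2 ≤ s * Q := by
      have h1 : a ^ 2 ≤ s * ∑ j ∈ S, |Δ j| ^ 2 := by
        rw [hadef, hsdef]
        exact sq_sum_le_card_mul_sum_sq
      have h2 : ∑ j ∈ S, |Δ j| ^ 2 = ∑ j ∈ S, (Δ j) ^ 2 := by
        apply Finset.sum_congr rfl; intro j _; rw [sq_abs]
      have h3 : ∑ j ∈ S, (Δ j) ^ 2 ≤ Q := by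
        rw [hQdef]
        exact Finset.sum_le_sum_of_subset_of_nonneg (Finset.subset_univ S)
          (fun j _ _ => sq_nonneg _)
      nlinarith
    have hA : (n:ℝ) * κ * a ^ 2 ≤ s * T := by
      nlinarith [mul_le_mul_of_nonneg_left hnκQ hs0,
        mul_le_mul_of_nonneg_left hcs hnκ.le]
    rcases le_or_gt a (ε * B) with hcase | hcase
    · exact easy hcase
    · -- a > ε B : bound a via RE
      have ha' : 0 < a := lt_of_le_of_lt (mul_nonneg hε₀ hB0) hcase
      have hTa : T ≤ 5 * lam * a := by nlinarith
      have h1 : ((n:ℝ) * κ * a) * a ≤ (5 * lam * s) * a := by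
        nlinarith [mul_le_mul_of_nonneg_left hTa hs0]
      have hka : (n:ℝ) * κ * a ≤ 5 * lam * s := le_of_mul_le_mul_right h1 ha'
      have key : ((n:ℝ) * κ) * (T + 3 * lam * (a + b)) ≤
          81 * lam ^ 2 * s + ((n:ℝ) * κ) * (18 * lam * ε * B) := by
        nlinarith [mul_le_mul_of_nonneg_left hdagger hnκ.le,
          mul_le_mul_of_nonneg_left hka (by linarith : (0:ℝ) ≤ 12 * lam),
          mul_nonneg (mul_nonneg hnκ.le hlam.le) (mul_nonneg hε₀ hB0),
          mul_nonneg (mul_nonneg hlam.le hlam.le) hs0]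
      have hdiv : 81 * lam ^ 2 * s / ((n:ℝ) * κ) + 18 * lam * ε * B
          = (81 * lam ^ 2 * s + ((n:ℝ) * κ) * (18 * lam * ε * B)) / ((n:ℝ) * κ) := by
        field_simp
      rw [hdiv, le_div_iff₀ hnκ]
      linarith [key]
  · -- cone violated: then a ≤ ε B
    apply easy
    have h1 : lam * b ≥ lam * (5 * a) := mul_le_mul_of_nonneg_left hcone.le hlam.le
    have h2 : lam * a ≤ lam * (ε * B) := by linarith
    exact le_of_mul_le_mul_left h2 hlam
end

section
/- Let X ∈ ℝ^{n×d}, y ∈ ℝⁿ, λ > 0, and suppose β̂ is a Lasso solution with active set A = {i ∈ [d] : |X_iᵀ(y − Xβ̂)| = λ} and equicorrelation signs η = sign(Xᵀ(y − Xβ̂)). Then the restriction of the KKT conditions to A gives X_Aᵀ(y − X_A β̂_A) = λη_A, and consequently η_A lies in the row space of X_A and any Lasso solution satisfies β̂_A = X_A⁺(y − λ(X_A⁺)ᵀη_A) + b for some b ∈ null(X_A), with β̂ vanishing outside A. -/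
open Matrix

/-- `P` is the Moore–Penrose pseudoinverse of `M`. -/
def IsMoorePenrose {m k : Type*} [Fintype m] [Fintype k]
    (M : Matrix m k ℝ) (P : Matrix k m ℝ) : Prop :=
  M * P * M = M ∧ P * M * P = P ∧ (M * P)ᵀ = M * P ∧ (P * M)ᵀ = P * M

/-!
Moving `β̂` along the coordinate direction `e_j` changes the cost by
`-t gⱼ + t² ‖Xⱼ‖² / 2 + λ (|β̂ⱼ + t| - |β̂ⱼ|)`, where `g = Xᵀ(y - Xβ̂)`. When `β̂ⱼ ≠ 0` this is
differentiable at `t = 0`, and Fermat's rule gives `gⱼ = λ sign β̂ⱼ`, so `|gⱼ| = λ` and `j ∈ A`.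
Hence `β̂` is supported on `A`, `Xβ̂ = X_A β̂_A`, and on `A` the identity `g = λη` is just
`g = sign(g) |g|`. The Penrose identities give `P Pᵀ X_Aᵀ = P`, so applying `P Pᵀ` to
`X_Aᵀ(y - X_A β̂_A) = λη_A` yields `P(y - λPᵀη_A) = P X_A β̂_A`; finally
`b = β̂_A - P X_A β̂_A` lies in `null(X_A)` because `X_A P X_A = X_A`.
-/

theorem Real.sign_mul_abs (r : ℝ) : Real.sign r * |r| = r := by
  rcases lt_trichotomy r 0 with h | rfl | h
  · rw [Real.sign_of_neg h, abs_of_neg h]; ring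
  · rw [abs_zero, mul_zero]
  · rw [Real.sign_of_pos h, abs_of_pos h, one_mul]

theorem Finset.sum_abs_add_single {ι : Type*} [Fintype ι] [DecidableEq ι] (β : ι → ℝ) (j : ι)
    (t : ℝ) : ∑ k, |(β + Pi.single j t : ι → ℝ) k| = ∑ k, |β k| + (|β j + t| - |β j|) := by
  have hoff : ∀ k ∈ univ.erase j, |(β + Pi.single j t : ι → ℝ) k| = |β k| := fun k hk => by
    rw [Pi.add_apply, Pi.single_eq_of_ne (ne_of_mem_erase hk), add_zero]
  rw [← add_sum_erase _ _ (mem_univ j), ← add_sum_erase _ _ (mem_univ j), sum_congr rfl hoff,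
    Pi.add_apply, Pi.single_eq_same]
  ring

theorem Matrix.mulVec_eq_submatrix_mulVec_of_support_subset {m k R : Type*} [Fintype m]
    [Fintype k] [NonUnitalNonAssocSemiring R] (X : Matrix m k R) (A : Finset k) (β : k → R)
    (hβ : ∀ j ∉ A, β j = 0) :
    X *ᵥ β = X.submatrix id ((↑) : A → k) *ᵥ fun a => β a := by
  funext i
  simp only [mulVec, dotProduct, submatrix_apply, id_eq]
  rw [Finset.sum_coe_sort A (fun j => X i j * β j)]
  exact (Finset.sum_subset A.subset_univ fun j _ hj => by rw [hβ j hj, mul_zero]).symm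

namespace IsMoorePenrose

variable {m k : Type*} [Fintype m] [Fintype k] {M : Matrix m k ℝ} {P : Matrix k m ℝ}

theorem mul_transpose_mul_transpose (hP : IsMoorePenrose M P) : P * Pᵀ * Mᵀ = P := by
  rw [Matrix.mul_assoc, ← transpose_mul, hP.2.2.1, ← Matrix.mul_assoc, hP.2.1]

theorem mulVec_sub_pinv_mulVec (hP : IsMoorePenrose M P) (β : k → ℝ) :
    M *ᵥ (β - P *ᵥ (M *ᵥ β)) = 0 := by
  rw [mulVec_sub, mulVec_mulVec, mulVec_mulVec, hP.1, sub_self]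

theorem pinv_mulVec_sub_smul_transpose_mulVec (hP : IsMoorePenrose M P) {y : m → ℝ}
    {β η : k → ℝ} {c : ℝ} (h : Mᵀ *ᵥ (y - M *ᵥ β) = c • η) :
    P *ᵥ (y - c • Pᵀ *ᵥ η) = P *ᵥ (M *ᵥ β) :=
  calc P *ᵥ (y - c • Pᵀ *ᵥ η) = P *ᵥ y - (P * Pᵀ * Mᵀ) *ᵥ (y - M *ᵥ β) := by
        rw [mulVec_sub, ← mulVec_smul, ← h, mulVec_mulVec, mulVec_mulVec]
    _ = P *ᵥ (M *ᵥ β) := by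
        rw [hP.mul_transpose_mul_transpose, ← mulVec_sub, sub_sub_cancel]

end IsMoorePenrose

section Lasso

variable {n d : ℕ} (X : Matrix (Fin n) (Fin d) ℝ) (y : Fin n → ℝ) (lam : ℝ)

theorem lassoCost_add_single (β : Fin d → ℝ) (j : Fin d) (t : ℝ) :
    lassoCost X y lam (β + Pi.single j t) = lassoCost X y lam β
      - t * (Xᵀ *ᵥ (y - X *ᵥ β)) j + t ^ 2 / 2 * ∑ r, X r j ^ 2
      + lam * (|β j + t| - |β j|) := by
  have hres : ∀ r, (y r - (X *ᵥ (β + Pi.single j t)) r) ^ 2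
      = (y r - (X *ᵥ β) r) ^ 2 - 2 * t * (X r j * (y r - (X *ᵥ β) r)) + t ^ 2 * X r j ^ 2 := by
    intro r
    simp only [mulVec_add, mulVec_single, Pi.add_apply, Pi.smul_apply, col_apply,
      MulOpposite.smul_eq_mul_unop, MulOpposite.unop_op]
    ring
  simp only [lassoCost, hres, Finset.sum_abs_add_single, Finset.sum_add_distrib,
    Finset.sum_sub_distrib, ← Finset.mul_sum]
  rw [show (Xᵀ *ᵥ (y - X *ᵥ β)) j = ∑ r, X r j * (y r - (X *ᵥ β) r) from rfl]
  ring

variable {X y lam} {β : Fin d → ℝ}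

theorem lasso_kkt_of_ne_zero (hmin : ∀ β', lassoCost X y lam β ≤ lassoCost X y lam β')
    {j : Fin d} (hj : β j ≠ 0) :
    (Xᵀ *ᵥ (y - X *ᵥ β)) j = lam * SignType.sign (β j) := by
  have hlocal : IsLocalMin (fun t => lassoCost X y lam (β + Pi.single j t)) 0 :=
    Filter.Eventually.of_forall fun t => by simpa using hmin _
  have hderiv : HasDerivAt (fun t => lassoCost X y lam (β + Pi.single j t))
      (-(Xᵀ *ᵥ (y - X *ᵥ β)) j + lam * SignType.sign (β j)) 0 := by
    simp_rw [lassoCost_add_single]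
    have hlin := ((hasDerivAt_id (0 : ℝ)).mul_const ((Xᵀ *ᵥ (y - X *ᵥ β)) j)).const_sub
      (lassoCost X y lam β)
    have hquad := ((hasDerivAt_pow 2 (0 : ℝ)).div_const 2).mul_const (∑ r, X r j ^ 2)
    have habs : HasDerivAt (fun t => |β j + t|) (SignType.sign (β j) : ℝ) 0 :=
      HasDerivAt.comp_const_add (β j) 0 (by simpa using hasDerivAt_abs hj)
    exact ((hlin.add hquad).add ((habs.sub_const |β j|).const_mul lam)).congr_deriv (by simp)
  linarith [hlocal.hasDerivAt_eq_zero hderiv]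

theorem abs_lasso_kkt_of_ne_zero (hlam : 0 < lam)
    (hmin : ∀ β', lassoCost X y lam β ≤ lassoCost X y lam β') {j : Fin d} (hj : β j ≠ 0) :
    |(Xᵀ *ᵥ (y - X *ᵥ β)) j| = lam := by
  rw [lasso_kkt_of_ne_zero hmin hj, abs_mul, abs_of_pos hlam]
  rcases hj.lt_or_gt with h | h <;> simp [h]

end Lasso

/-- Structure of Lasso solutions: the KKT conditions restricted to the active set
`A = {i : |X_iᵀ(y − Xβ̂)| = λ}` give `X_Aᵀ(y − X_A β̂_A) = λ η_A`; consequently `η_A`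
lies in the row space of `X_A`, any Lasso solution satisfies
`β̂_A = X_A⁺(y − λ(X_A⁺)ᵀη_A) + b` for some `b ∈ null(X_A)`, and `β̂` vanishes
outside `A`. -/
theorem lasso_solution_structure {n d : ℕ} (X : Matrix (Fin n) (Fin d) ℝ)
    (y : Fin n → ℝ) (lam : ℝ) (hlam : 0 < lam) (βh : Fin d → ℝ)
    (hmin : ∀ β : Fin d → ℝ, lassoCost X y lam βh ≤ lassoCost X y lam β)
    (A : Finset (Fin d))
    (hA : ∀ i, i ∈ A ↔ |∑ r, X r i * (y r - X.mulVec βh r)| = lam)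
    (η : Fin d → ℝ)
    (hη : ∀ i, η i = Real.sign (∑ r, X r i * (y r - X.mulVec βh r)))
    (XA : Matrix (Fin n) {i // i ∈ A} ℝ) (hXA : ∀ r a, XA r a = X r a.1)
    (P : Matrix {i // i ∈ A} (Fin n) ℝ) (hP : IsMoorePenrose XA P) :
    (XAᵀ.mulVec (fun r => y r - XA.mulVec (fun a => βh a.1) r) =
        fun a : {i // i ∈ A} => lam * η a.1) ∧
    (∃ c : Fin n → ℝ, (fun a : {i // i ∈ A} => η a.1) = XAᵀ.mulVec c) ∧
    (∃ b : {i // i ∈ A} → ℝ, XA.mulVec b = 0 ∧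
      (fun a : {i // i ∈ A} => βh a.1) =
        fun a => P.mulVec (fun r => y r - lam * Pᵀ.mulVec (fun a' : {i // i ∈ A} => η a'.1) r) a
          + b a) ∧
    (∀ j, j ∉ A → βh j = 0) := by
  have hcorr : ∀ i, ∑ r, X r i * (y r - (X *ᵥ βh) r) = (Xᵀ *ᵥ (y - X *ᵥ βh)) i := fun _ => rfl
  simp only [hcorr] at hA hη
  set βA : A → ℝ := fun a => βh a
  set ηA : A → ℝ := fun a => η a
  have hsupp : ∀ j ∉ A, βh j = 0 := fun j hj =>
    by_contra fun hβ => hj ((hA j).2 (abs_lasso_kkt_of_ne_zero hlam hmin hβ))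
  have hfit : X *ᵥ βh = XA *ᵥ βA := by
    rw [show XA = X.submatrix id (↑) from Matrix.ext hXA]
    exact X.mulVec_eq_submatrix_mulVec_of_support_subset A βh hsupp
  have hactive : XAᵀ *ᵥ (y - XA *ᵥ βA) = lam • ηA := by
    funext a
    have hcol : (XAᵀ *ᵥ (y - X *ᵥ βh)) a = (Xᵀ *ᵥ (y - X *ᵥ βh)) a := by
      simp only [mulVec, dotProduct, transpose_apply, hXA]
    rw [← hfit, hcol, Pi.smul_apply, smul_eq_mul, show ηA a = η a from rfl, hη,
      ← (hA a).1 a.2, mul_comm, Real.sign_mul_abs]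
  refine ⟨hactive, ⟨lam⁻¹ • (y - XA *ᵥ βA), ?_⟩,
    ⟨βA - P *ᵥ (XA *ᵥ βA), hP.mulVec_sub_pinv_mulVec βA, ?_⟩, hsupp⟩
  · rw [mulVec_smul, hactive, smul_smul, inv_mul_cancel₀ hlam.ne', one_smul]
  · show βA = P *ᵥ (y - lam • Pᵀ *ᵥ ηA) + (βA - P *ᵥ (XA *ᵥ βA))
    rw [hP.pinv_mulVec_sub_smul_transpose_mulVec hactive, add_sub_cancel]
end

section
/- Let X ∈ ℝ^{n×d}, A ⊆ [d] with ‖X_A⁺X_i‖₁ ≤ α for a given column index i ∉ A and some α ∈ (0,1), and suppose θ = (X_AᵀX_A)⁺η_A where η_A = (1/λ_t)X_Aᵀ(y − X_A β̃_A(λ_t)) satisfies ‖X_Aᵀ(y − X_A β̃_A(λ_t))‖_∞ ≤ λ_t. Then for either sign choice, |±1 − X_iᵀX_Aθ| ≥ 1 − α. -/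
/-!
Since `X_A X_A⁺` is symmetric and `(X_AᵀX_A)⁺ X_Aᵀ = X_A⁺`, the scalar `X_iᵀX_Aθ` equals
`λ_t⁻¹ ⟨X_A⁺X_i, X_Aᵀ(y − X_A β̃_A)⟩`, which Hölder's inequality bounds by `‖X_A⁺X_i‖₁ ≤ α`.
The reverse triangle inequality then keeps `±1 − X_iᵀX_Aθ` at distance at least `1 − α` from `0`.
-/

open Matrix

theorem abs_dotProduct_le_sum_abs_mul {ι : Type*} [Fintype ι] {p w : ι → ℝ} {c : ℝ}
    (hw : ∀ a, |w a| ≤ c) : |p ⬝ᵥ w| ≤ (∑ a, |p a|) * c :=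
  calc |p ⬝ᵥ w| ≤ ∑ a, |p a * w a| := Finset.abs_sum_le_sum_abs _ _
  _ ≤ ∑ a, |p a| * c := Finset.sum_le_sum fun a _ => by
    rw [abs_mul]; exact mul_le_mul_of_nonneg_left (hw a) (abs_nonneg _)
  _ = (∑ a, |p a|) * c := (Finset.sum_mul _ _ _).symm

theorem dotProduct_mulVec_mulVec_of_symm {m k : Type*} [Fintype m] [Fintype k]
    {M : Matrix m k ℝ} {P : Matrix k m ℝ} (hsymm : (M * P)ᵀ = M * P) (x v : m → ℝ) :
    x ⬝ᵥ M *ᵥ (P *ᵥ v) = (P *ᵥ x) ⬝ᵥ Mᵀ *ᵥ v := by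
  rw [mulVec_mulVec, dotProduct_mulVec, ← mulVec_transpose, hsymm, ← mulVec_mulVec,
    dotProduct_comm, dotProduct_mulVec, ← mulVec_transpose, dotProduct_comm]

theorem one_sub_le_abs_sub_of_abs_le {c s α : ℝ} (hc : |c| = 1) (hs : |s| ≤ α) :
    1 - α ≤ |c - s| := by
  have := abs_sub_abs_le_abs_sub c s
  linarith

namespace IsMoorePenrose

variable {m k : Type*} [Fintype m] [Fintype k] {M : Matrix m k ℝ} {P : Matrix k m ℝ}

theorem unique {P' : Matrix k m ℝ} (h : IsMoorePenrose M P) (h' : IsMoorePenrose M P') :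
    P = P' := by
  obtain ⟨hMPM, hPMP, hMP_symm, hPM_symm⟩ := h
  obtain ⟨hMPM', hPMP', hMP_symm', hPM_symm'⟩ := h'
  have hMP : M * P = M * P' := by
    calc M * P = (M * P' * M) * P := by rw [hMPM']
    _ = (M * P')ᵀ * (M * P)ᵀ := by rw [hMP_symm, hMP_symm', Matrix.mul_assoc]
    _ = P'ᵀ * (M * P * M)ᵀ := by simp only [transpose_mul, Matrix.mul_assoc]
    _ = M * P' := by rw [hMPM, ← transpose_mul, hMP_symm']
  have hPM : P * M = P' * M := by
    calc P * M = P * (M * P' * M) := by rw [hMPM']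
    _ = (P * M)ᵀ * (P' * M)ᵀ := by rw [hPM_symm, hPM_symm', Matrix.mul_assoc, Matrix.mul_assoc]
    _ = (M * P * M)ᵀ * P'ᵀ := by simp only [transpose_mul, Matrix.mul_assoc]
    _ = P' * M := by rw [hMPM, ← transpose_mul, hPM_symm']
  calc P = P * M * P := hPMP.symm
  _ = P' * M * P' := by rw [Matrix.mul_assoc, hMP, ← Matrix.mul_assoc, hPM]
  _ = P' := hPMP'

theorem gram (h : IsMoorePenrose M P) : IsMoorePenrose (Mᵀ * M) (P * Pᵀ) := by
  obtain ⟨hMPM, hPMP, hMP_symm, hPM_symm⟩ := h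
  have hleft : P * Pᵀ * (Mᵀ * M) = P * M := by
    rw [Matrix.mul_assoc, ← Matrix.mul_assoc Pᵀ, ← transpose_mul, hMP_symm, ← Matrix.mul_assoc,
      ← Matrix.mul_assoc, hPMP]
  have hright : Mᵀ * M * (P * Pᵀ) = P * M := by
    rw [← hPM_symm, ← hleft]
    simp only [transpose_mul, transpose_transpose, Matrix.mul_assoc]
  refine ⟨?_, ?_, ?_, ?_⟩
  · rw [hright, ← hPM_symm, ← Matrix.mul_assoc, ← transpose_mul, ← Matrix.mul_assoc, hMPM]
  · rw [hleft, ← Matrix.mul_assoc, hPMP]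
  · rw [hright, hPM_symm]
  · rw [hleft, hPM_symm]

theorem gram_mul_transpose {Q : Matrix k k ℝ} (h : IsMoorePenrose M P)
    (hQ : IsMoorePenrose (Mᵀ * M) Q) : Q * Mᵀ = P := by
  rw [hQ.unique h.gram]
  obtain ⟨-, hPMP, hMP_symm, -⟩ := h
  rw [Matrix.mul_assoc, ← transpose_mul, hMP_symm, ← Matrix.mul_assoc, hPMP]

theorem abs_dotProduct_mulVec_gram_le {Q : Matrix k k ℝ} (hP : IsMoorePenrose M P)
    (hQ : IsMoorePenrose (Mᵀ * M) Q) {x v : m → ℝ} {α lam : ℝ} (hlam : 0 < lam)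
    (hx : ∑ a, |(P *ᵥ x) a| ≤ α) (hv : ∀ a, |(Mᵀ *ᵥ v) a| ≤ lam) :
    |x ⬝ᵥ M *ᵥ (Q *ᵥ (lam⁻¹ • Mᵀ *ᵥ v))| ≤ α := by
  have hθ : Q *ᵥ (lam⁻¹ • Mᵀ *ᵥ v) = lam⁻¹ • P *ᵥ v := by
    rw [mulVec_smul, mulVec_mulVec, hP.gram_mul_transpose hQ]
  obtain ⟨-, -, hMP_symm, -⟩ := hP
  rw [hθ, mulVec_smul, dotProduct_smul, dotProduct_mulVec_mulVec_of_symm hMP_symm, smul_eq_mul,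
    abs_mul, abs_inv, abs_of_pos hlam, inv_mul_le_iff₀ hlam, mul_comm lam]
  exact (abs_dotProduct_le_sum_abs_mul hv).trans (mul_le_mul_of_nonneg_right hx hlam.le)

end IsMoorePenrose

theorem joining_denominator_lower_bound_general {n d : ℕ} (X : Matrix (Fin n) (Fin d) ℝ)
    (A : Finset (Fin d)) (i : Fin d)
    (XA : Matrix (Fin n) {j // j ∈ A} ℝ)
    (P : Matrix {j // j ∈ A} (Fin n) ℝ) (hP : IsMoorePenrose XA P)
    (Q : Matrix {j // j ∈ A} {j // j ∈ A} ℝ) (hQ : IsMoorePenrose (XAᵀ * XA) Q)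
    (α : ℝ)
    (hinc : ∑ a : {j // j ∈ A}, |P.mulVec (fun r => X r i) a| ≤ α)
    (y : Fin n → ℝ) (βtA : {j // j ∈ A} → ℝ) (lamt : ℝ) (hlamt : 0 < lamt)
    (ηA : {j // j ∈ A} → ℝ)
    (hηA : ηA = fun a => lamt⁻¹ * ∑ r, XA r a * (y r - XA.mulVec βtA r))
    (hbound : ∀ a, |∑ r, XA r a * (y r - XA.mulVec βtA r)| ≤ lamt)
    (θ : {j // j ∈ A} → ℝ) (hθ : θ = Q.mulVec ηA) :
    1 - α ≤ |1 - ∑ r, X r i * XA.mulVec θ r| ∧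
    1 - α ≤ |(-1) - ∑ r, X r i * XA.mulVec θ r| := by
  have hη : ηA = lamt⁻¹ • XAᵀ *ᵥ (y - XA *ᵥ βtA) := hηA
  have hs : |∑ r, X r i * XA.mulVec θ r| ≤ α := by
    rw [hθ, hη]
    exact hP.abs_dotProduct_mulVec_gram_le hQ hlamt hinc hbound
  exact ⟨one_sub_le_abs_sub_of_abs_le abs_one hs,
    one_sub_le_abs_sub_of_abs_le (by rw [abs_neg, abs_one]) hs⟩

/-- If `‖X_A⁺X_i‖₁ ≤ α` for a column `i ∉ A` with `α ∈ (0,1)`, and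
`θ = (X_AᵀX_A)⁺ η_A` where `η_A = (1/λ_t)X_Aᵀ(y − X_A β̃_A)` satisfies
`‖X_Aᵀ(y − X_A β̃_A)‖_∞ ≤ λ_t`, then `|±1 − X_iᵀX_Aθ| ≥ 1 − α` for either sign. -/
theorem joining_denominator_lower_bound {n d : ℕ} (X : Matrix (Fin n) (Fin d) ℝ)
    (A : Finset (Fin d)) (i : Fin d) (hi : i ∉ A)
    (XA : Matrix (Fin n) {j // j ∈ A} ℝ) (hXA : ∀ r a, XA r a = X r a.1)
    (P : Matrix {j // j ∈ A} (Fin n) ℝ) (hP : IsMoorePenrose XA P)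
    (Q : Matrix {j // j ∈ A} {j // j ∈ A} ℝ) (hQ : IsMoorePenrose (XAᵀ * XA) Q)
    (α : ℝ) (hα : α ∈ Set.Ioo (0 : ℝ) 1)
    (hinc : ∑ a : {j // j ∈ A}, |P.mulVec (fun r => X r i) a| ≤ α)
    (y : Fin n → ℝ) (βtA : {j // j ∈ A} → ℝ) (lamt : ℝ) (hlamt : 0 < lamt)
    (ηA : {j // j ∈ A} → ℝ)
    (hηA : ηA = fun a => lamt⁻¹ * ∑ r, XA r a * (y r - XA.mulVec βtA r))
    (hbound : ∀ a, |∑ r, XA r a * (y r - XA.mulVec βtA r)| ≤ lamt)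
    (θ : {j // j ∈ A} → ℝ) (hθ : θ = Q.mulVec ηA) :
    1 - α ≤ |1 - ∑ r, X r i * XA.mulVec θ r| ∧
    1 - α ≤ |(-1) - ∑ r, X r i * XA.mulVec θ r| :=
  joining_denominator_lower_bound_general X A i XA P hP Q hQ α hinc y βtA lamt hlamt ηA hηA hbound θ
    hθ
end
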